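/- For every integer n ≥ 3, 2^{n−3} equals the sum, over all compositions (a_1, …, a_k) of n, of the products (F_{a_1} − 1)(F_{a_2} − 1) ⋯ (F_{a_k} − 1). -/

import Mathlib

/-!
Splitting off the first block of a composition shows that `T n = ∑_{c ⊨ n} ∏ f(cᵢ)` satisfies
`T 0 = 1` and `T (n + 1) = ∑_{i ≤ n} f(n + 1 - i) T i`. For `f a = F_a - 1` this gives `T 1 = T 2 = 0`,
and `T (m + 3) = 2 ^ m` follows by strong induction from the Fibonacci identity
`∑_{j < m} (F_{m-j} - 1) 2^j + F_{m+3} = 2^m + 1`.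
-/

open Finset

namespace Composition

/-- The index is the sum of the remaining blocks, so the first block is `n + 1 - i`. -/
def consEquiv (n : ℕ) : Composition (n + 1) ≃ Σ i : Fin (n + 1), Composition i where
  toFun
    | ⟨[], _, h⟩ => absurd h (by simp)
    | ⟨a :: l, hpos, hsum⟩ =>
      ⟨⟨l.sum, by have := hpos List.mem_cons_self; simp only [List.sum_cons] at hsum; omega⟩,
        ⟨l, fun hi => hpos (List.mem_cons_of_mem a hi), rfl⟩⟩
  invFun p := ⟨(n + 1 - p.1) :: p.2.blocks,
    by
      simp only [List.mem_cons, forall_eq_or_imp]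
      exact ⟨by omega, fun _ => p.2.blocks_pos⟩,
    by simp only [List.sum_cons, p.2.blocks_sum]; omega⟩
  left_inv
    | ⟨[], _, h⟩ => absurd h (by simp)
    | ⟨a :: l, _, hsum⟩ => Composition.ext (by simp only [List.sum_cons] at hsum ⊢; congr 1; omega)
  right_inv := by
    rintro ⟨⟨i, hi⟩, ⟨l, hpos, hsum⟩⟩
    obtain rfl : l.sum = i := hsum
    rfl

end Composition

section CompositionSum

variable {R : Type*} [CommSemiring R] (f : ℕ → R)

def compositionSum (n : ℕ) : R := ∑ c : Composition n, (c.blocks.map f).prod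

lemma compositionSum_zero : compositionSum f 0 = 1 := by
  have hnil (c : Composition 0) : c.blocks = [] := c.blocks_eq_nil.2 rfl
  simp [compositionSum, hnil, composition_card]

lemma compositionSum_succ (n : ℕ) :
    compositionSum f (n + 1) = ∑ i ∈ range (n + 1), f (n + 1 - i) * compositionSum f i := by
  rw [compositionSum, ← (Composition.consEquiv n).symm.sum_comp, Fintype.sum_sigma,
    ← Fin.sum_univ_eq_sum_range]
  simp [Composition.consEquiv, compositionSum, mul_sum]

end CompositionSum

lemma sum_fib_sub_one_mul_two_pow_add_fib (m : ℕ) :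
    ∑ j ∈ range m, (Nat.fib (m - j) - 1) * 2 ^ j + Nat.fib (m + 3) = 2 ^ m + 1 := by
  induction m with
  | zero => simp [Nat.fib_add_two]
  | succ m ih =>
    have hshift : ∑ j ∈ range m, (Nat.fib (m + 1 - (j + 1)) - 1) * 2 ^ (j + 1)
        = 2 * ∑ j ∈ range m, (Nat.fib (m - j) - 1) * 2 ^ j := by
      rw [mul_sum]
      exact sum_congr rfl fun j _ => by rw [Nat.add_sub_add_right, pow_succ]; ring
    have hfib : 1 ≤ Nat.fib (m + 1) := Nat.fib_pos.2 m.succ_pos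
    have hfib3 : Nat.fib (m + 3) = Nat.fib (m + 1) + Nat.fib (m + 2) := Nat.fib_add_two
    have hfib4 : Nat.fib (m + 1 + 3) = Nat.fib (m + 2) + Nat.fib (m + 3) := Nat.fib_add_two
    rw [sum_range_succ', hshift, pow_succ]
    simp only [Nat.sub_zero, pow_zero, mul_one]
    omega

lemma compositionSum_fib_sub_one_add_three (m : ℕ) :
    compositionSum (fun a => Nat.fib a - 1) (m + 3) = 2 ^ m := by
  induction m using Nat.strong_induction_on with | _ m ih => ?_
  have h0 := compositionSum_zero (fun a => Nat.fib a - 1)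
  have h1 : compositionSum (fun a => Nat.fib a - 1) 1 = 0 := by
    simp [compositionSum_succ]
  have h2 : compositionSum (fun a => Nat.fib a - 1) 2 = 0 := by
    simp [compositionSum_succ, sum_range_succ]
  rw [compositionSum_succ, sum_range_succ', sum_range_succ', sum_range_succ']
  have hsum : ∑ k ∈ range m, (Nat.fib (m + 2 + 1 - (k + 1 + 1 + 1)) - 1) *
      compositionSum (fun a => Nat.fib a - 1) (k + 1 + 1 + 1)
      = ∑ k ∈ range m, (Nat.fib (m - k) - 1) * 2 ^ k :=
    sum_congr rfl fun k hk => by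
      rw [ih k (mem_range.1 hk), show m + 2 + 1 - (k + 1 + 1 + 1) = m - k by omega]
  have hfib : 1 ≤ Nat.fib (m + 2 + 1) := Nat.fib_pos.2 (by omega)
  have hfibsum : _ + Nat.fib (m + 2 + 1) = _ := sum_fib_sub_one_mul_two_pow_add_fib m
  simp only [hsum, zero_add, Nat.reduceAdd, h0, h1, h2, mul_zero, add_zero, mul_one, Nat.sub_zero]
  omega

theorem two_pow_eq_sum_compositions_fib_sub_one (n : ℕ) (hn : 3 ≤ n) :
    2 ^ (n - 3) =
      ∑ c : Composition n, (c.blocks.map fun a => Nat.fib a - 1).prod := by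
  obtain ⟨m, rfl⟩ := Nat.exists_eq_add_of_le' hn
  rw [Nat.add_sub_cancel, ← compositionSum_fib_sub_one_add_three]
  rfl
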